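/- arXiv:1905.07519 — 6 statements merged into one kernel-verified Lean document; each statement's English description precedes it below -/
import Mathlib

section
/- Suppose the Robin-type coupling conditions (C̃2), (C̃3), (C̃4) hold at Global-Local iteration k. If u_Γ^{k,1/2} = u_Γ^k, then the Global-Local formulation is converged, i.e. the original coupling conditions hold: λ_C^k + λ_L^k = 0 (weak continuity of interface tractions), u_Γ^k = u_G^k, and u_Γ^k = u_L^k (weak continuity of interface displacements). -/
open scoped InnerProductSpace

theorem globalLocal_converged_of_interface_displacement_match_general
    {H : Type*} [NormedAddCommGroup H] [InnerProductSpace ℝ H]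
    (A_G : H →ₗ[ℝ] H)
    (lamC_k lamL_k uG_k uL_k uGammaHalf_k uGamma_k : H)
    -- (C̃2)
    (hC2 : uGammaHalf_k = uL_k)
    -- (C̃3)
    (hC3 : ∀ v : H, ⟪lamC_k, v⟫_ℝ + ⟪A_G uGamma_k, v⟫_ℝ = ⟪A_G uL_k, v⟫_ℝ - ⟪lamL_k, v⟫_ℝ)
    -- (C̃4)
    (hC4 : uGammaHalf_k = uG_k)
    -- hypothesis: u_Γ^{k,1/2} = u_Γ^k
    (hmatch : uGammaHalf_k = uGamma_k) :
    (∀ v : H, ⟪lamC_k, v⟫_ℝ + ⟪lamL_k, v⟫_ℝ = 0) ∧ uGamma_k = uG_k ∧ uGamma_k = uL_k := by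
  have hGammaL : uGamma_k = uL_k := hmatch ▸ hC2
  -- With `u_Γ^k = u_L^k` the stiffness terms in (C̃3) cancel.
  refine ⟨fun v => ?_, hmatch ▸ hC4, hGammaL⟩
  linarith [hGammaL ▸ hC3 v]

/-- If the Robin-type coupling conditions (C̃2), (C̃3), (C̃4) hold at
Global-Local iteration `k` and `u_Γ^{k,1/2} = u_Γ^k`, then the Global-Local formulation
is converged: weak continuity of the interface tractions `λ_C^k + λ_L^k = 0` and weak
continuity of the interface displacements `u_Γ^k = u_G^k` and `u_Γ^k = u_L^k`. -/
theorem globalLocal_converged_of_interface_displacement_match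
    {H : Type*} [NormedAddCommGroup H] [InnerProductSpace ℝ H]
    (A_G A_L : H →ₗ[ℝ] H)
    (lamC_km1 lamC_k lamL_k uG_km1 uG_k uL_k uGammaHalf_k uGamma_k : H)
    -- (C̃2)
    (hC2 : uGammaHalf_k = uL_k)
    -- (C̃3)
    (hC3 : ∀ v : H, ⟪lamC_k, v⟫_ℝ + ⟪A_G uGamma_k, v⟫_ℝ = ⟪A_G uL_k, v⟫_ℝ - ⟪lamL_k, v⟫_ℝ)
    -- (C̃4)
    (hC4 : uGammaHalf_k = uG_k)
    -- hypothesis: u_Γ^{k,1/2} = u_Γ^k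
    (hmatch : uGammaHalf_k = uGamma_k) :
    (∀ v : H, ⟪lamC_k, v⟫_ℝ + ⟪lamL_k, v⟫_ℝ = 0) ∧ uGamma_k = uG_k ∧ uGamma_k = uL_k :=
  globalLocal_converged_of_interface_displacement_match_general A_G lamC_k lamL_k uG_k uL_k
    uGammaHalf_k uGamma_k hC2 hC3 hC4 hmatch
end

section
/- Suppose the Robin-type coupling conditions (C̃1), (C̃2), (C̃3), (C̃4) hold at Global-Local iteration k and the global augmented interface stiffness operator A_G is injective. If ΔΛ_L = 0 (the local Robin right-hand side is unchanged between iterations k−1 and k), then u_Γ^k = u_Γ^{k,1/2}. -/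
/-!
Tested against every `v`, the weak conditions become identities in `H`. Since
`u_G^k = u_Γ^{k,1/2}`, comparing (C̃1) with `ΔΛ_L = 0` gives `λ_L^k = -λ_C^k`, and then (C̃3)
collapses to `A_G u_Γ^k = A_G u_L^k`; injectivity of `A_G` finishes.
-/

open scoped InnerProductSpace

section WeakForm

variable {E : Type*} [NormedAddCommGroup E] [InnerProductSpace ℝ E]

theorem add_eq_sub_of_forall_inner {a b c d : E}
    (h : ∀ v, ⟪a, v⟫_ℝ + ⟪b, v⟫_ℝ = ⟪c, v⟫_ℝ - ⟪d, v⟫_ℝ) : a + b = c - d :=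
  ext_inner_right ℝ fun v => by simpa only [inner_add_left, inner_sub_left] using h v

theorem sub_eq_sub_of_forall_inner {a b c d : E}
    (h : ∀ v, ⟪a, v⟫_ℝ - ⟪b, v⟫_ℝ = ⟪c, v⟫_ℝ - ⟪d, v⟫_ℝ) : a - b = c - d :=
  ext_inner_right ℝ fun v => by simpa only [inner_sub_left] using h v

end WeakForm

theorem eq_neg_of_add_eq_of_sub_eq {G : Type*} [AddCommGroup G] {x y a b : G}
    (h₁ : x + a = b) (h₂ : a - y = b) : x = -y := by
  rw [← h₂] at h₁
  simpa [add_comm x a, sub_eq_add_neg] using h₁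

/-- If the Robin-type coupling conditions (C̃1)-(C̃4) hold at Global-Local
iteration `k`, the global augmented interface stiffness operator `A_G` is injective, and
`ΔΛ_L = 0` (the local Robin right-hand side is unchanged between iterations `k-1` and `k`),
then `u_Γ^k = u_Γ^{k,1/2}`. -/
theorem interface_displacement_match_of_deltaLambdaL_eq_zero
    {H : Type*} [NormedAddCommGroup H] [InnerProductSpace ℝ H]
    (A_G A_L : H →ₗ[ℝ] H) (hAG : Function.Injective A_G)
    (lamC_km1 lamC_k lamL_k uG_km1 uG_k uL_k uGammaHalf_k uGamma_k : H)
    -- (C̃1)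
    (hC1 : ∀ v : H, ⟪lamL_k, v⟫_ℝ + ⟪A_L uGammaHalf_k, v⟫_ℝ
      = ⟪A_L uG_km1, v⟫_ℝ - ⟪lamC_km1, v⟫_ℝ)
    -- (C̃2)
    (hC2 : uGammaHalf_k = uL_k)
    -- (C̃3)
    (hC3 : ∀ v : H, ⟪lamC_k, v⟫_ℝ + ⟪A_G uGamma_k, v⟫_ℝ = ⟪A_G uL_k, v⟫_ℝ - ⟪lamL_k, v⟫_ℝ)
    -- (C̃4)
    (hC4 : uGammaHalf_k = uG_k)
    -- ΔΛ_L = 0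
    (hDelta : ∀ v : H, ⟪A_L uG_k, v⟫_ℝ - ⟪lamC_k, v⟫_ℝ
      = ⟪A_L uG_km1, v⟫_ℝ - ⟪lamC_km1, v⟫_ℝ) :
    uGamma_k = uGammaHalf_k := by
  subst hC2 hC4
  have hLocal := add_eq_sub_of_forall_inner hC1
  have hGlobal := add_eq_sub_of_forall_inner hC3
  have hlam : lamL_k = -lamC_k :=
    eq_neg_of_add_eq_of_sub_eq hLocal (sub_eq_sub_of_forall_inner hDelta)
  rw [hlam, sub_neg_eq_add, add_comm (A_G _)] at hGlobal
  exact hAG (add_left_cancel hGlobal)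
end

section
/- Suppose the Robin-type coupling conditions (C̃1), (C̃2), (C̃3), (C̃4) hold at Global-Local iteration k. If u_Γ^{k,1/2} = u_Γ^k, then ΔΛ_L = 0, i.e. the local Robin right-hand side is unchanged between iterations k−1 and k. -/
open scoped InnerProductSpace

theorem eq_neg_of_inner_add_eq_inner_sub {𝕜 E : Type*} [RCLike 𝕜] [NormedAddCommGroup E]
    [InnerProductSpace 𝕜 E] {x y w : E}
    (h : ∀ v : E, ⟪x, v⟫_𝕜 + ⟪w, v⟫_𝕜 = ⟪w, v⟫_𝕜 - ⟪y, v⟫_𝕜) : x = -y :=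
  ext_inner_right 𝕜 fun v => by
    rw [inner_neg_left]
    linear_combination h v

/-- If the Robin-type coupling conditions (C̃1)-(C̃4) hold at Global-Local
iteration `k` and `u_Γ^{k,1/2} = u_Γ^k`, then `ΔΛ_L = 0`, i.e. the local Robin right-hand
side is unchanged between iterations `k-1` and `k`. -/
theorem deltaLambdaL_eq_zero_of_interface_displacement_match
    {H : Type*} [NormedAddCommGroup H] [InnerProductSpace ℝ H]
    (A_G A_L : H →ₗ[ℝ] H)
    (lamC_km1 lamC_k lamL_k uG_km1 uG_k uL_k uGammaHalf_k uGamma_k : H)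
    -- (C̃1)
    (hC1 : ∀ v : H, ⟪lamL_k, v⟫_ℝ + ⟪A_L uGammaHalf_k, v⟫_ℝ
      = ⟪A_L uG_km1, v⟫_ℝ - ⟪lamC_km1, v⟫_ℝ)
    -- (C̃2)
    (hC2 : uGammaHalf_k = uL_k)
    -- (C̃3)
    (hC3 : ∀ v : H, ⟪lamC_k, v⟫_ℝ + ⟪A_G uGamma_k, v⟫_ℝ = ⟪A_G uL_k, v⟫_ℝ - ⟪lamL_k, v⟫_ℝ)
    -- (C̃4)
    (hC4 : uGammaHalf_k = uG_k)
    -- hypothesis: u_Γ^{k,1/2} = u_Γ^k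
    (hmatch : uGammaHalf_k = uGamma_k) :
    ∀ v : H, ⟪A_L uG_k, v⟫_ℝ - ⟪lamC_k, v⟫_ℝ = ⟪A_L uG_km1, v⟫_ℝ - ⟪lamC_km1, v⟫_ℝ := by
  subst hC2 hC4 hmatch
  -- With u_Γ^k = u_L^k the global Robin condition (C̃3) collapses to λ_C^k = -λ_L^k.
  have hlamC : lamC_k = -lamL_k := eq_neg_of_inner_add_eq_inner_sub hC3
  intro v
  rw [hlamC, inner_neg_left, sub_neg_eq_add, add_comm]
  exact hC1 v
end

section
/- The homogeneous stress response σ(ε) = c·ε/(1 + (l·c/G_c)·ε²)² attains its maximum over ε ∈ [0,∞) exactly at the critical strain ε_c = (√3/3)·√(G_c/(l·c)), this maximizer is unique on [0,∞), and the maximum value is the critical stress σ_c = (3√3/16)·√(G_c·c/l). -/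
/-!
Writing `k = l·c/G_c`, the substitution `t = √k·ε` turns the stress into
`σ(ε) = (c/√k)·t/(1 + t²)²`, so everything reduces to the single profile `t/(1 + t²)²`.
Its maximum `3√3/16` at `t = √3/3` comes from the factorization
`3√3/16·(1 + t²)² - t = 3√3/16·(t - √3/3)²·((t + √3/3)² + 8/3)`.
-/

open Real

noncomputable def unitStress (t : ℝ) : ℝ := t / (1 + t ^ 2) ^ 2

lemma max_sub_unitStress (t : ℝ) :
    3 * √3 / 16 - unitStress t =
      3 * √3 / 16 * (t - √3 / 3) ^ 2 * ((t + √3 / 3) ^ 2 + 8 / 3) / (1 + t ^ 2) ^ 2 := by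
  have h3 : √3 ^ 2 = 3 := sq_sqrt (by norm_num)
  rw [unitStress, eq_div_iff (by positivity), sub_mul, div_mul_cancel₀ _ (by positivity)]
  linear_combination (t / 3 + 3 * √3 / 16 * (2 / 9 * t ^ 2 - (√3 ^ 2 + 27) / 81)) * h3

lemma unitStress_le (t : ℝ) : unitStress t ≤ 3 * √3 / 16 := by
  rw [← sub_nonneg, max_sub_unitStress]
  positivity

lemma unitStress_eq_max_iff {t : ℝ} : unitStress t = 3 * √3 / 16 ↔ t = √3 / 3 := by
  have h₁ : (0 : ℝ) < 3 * √3 / 16 := by positivity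
  have h₂ : (0 : ℝ) < (t + √3 / 3) ^ 2 + 8 / 3 := by positivity
  have h₃ : (0 : ℝ) < (1 + t ^ 2) ^ 2 := by positivity
  rw [eq_comm, ← sub_eq_zero, max_sub_unitStress]
  simp [h₁.ne', h₂.ne', h₃.ne', sub_eq_zero]

lemma stress_eq_unitStress {k : ℝ} (hk : 0 < k) (c ε : ℝ) :
    c * ε / (1 + k * ε ^ 2) ^ 2 = c / √k * unitStress (√k * ε) := by
  have hk' : √k ^ 2 = k := sq_sqrt hk.le
  have : 0 < √k := sqrt_pos.mpr hk
  rw [unitStress, mul_pow, hk']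
  field_simp

/-- The homogeneous stress response `σ(ε) = c·ε/(1 + (l·c/G_c)·ε²)²` attains
its maximum over `ε ∈ [0,∞)` exactly at the critical strain
`ε_c = (√3/3)·√(G_c/(l·c))`, this maximizer is unique on `[0,∞)`, and the maximum value
is the critical stress `σ_c = (3√3/16)·√(G_c·c/l)`. -/
theorem critical_stress_of_homogeneous_phase_field
    (c Gc l : ℝ) (hc : 0 < c) (hGc : 0 < Gc) (hl : 0 < l) :
    let σ : ℝ → ℝ := fun ε => c * ε / (1 + (l * c / Gc) * ε ^ 2) ^ 2
    let εc : ℝ := (Real.sqrt 3 / 3) * Real.sqrt (Gc / (l * c))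
    let σc : ℝ := (3 * Real.sqrt 3 / 16) * Real.sqrt (Gc * c / l)
    σ εc = σc ∧ (∀ ε : ℝ, 0 ≤ ε → σ ε ≤ σc) ∧
      (∀ ε : ℝ, 0 ≤ ε → σ ε = σc → ε = εc) := by
  intro σ εc σc
  set k := l * c / Gc
  have hk : 0 < k := by positivity
  have hsk : 0 < √k := sqrt_pos.mpr hk
  have hσ (ε : ℝ) : σ ε = c / √k * unitStress (√k * ε) := stress_eq_unitStress hk c ε
  have hεc : √k * εc = √3 / 3 := by
    simp only [εc]
    rw [show Gc / (l * c) = k⁻¹ by simp only [k]; field_simp, sqrt_inv]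
    field_simp
  have hσc : σc = c / √k * (3 * √3 / 16) := by
    simp only [σc]
    rw [show Gc * c / l = (c / √k) ^ 2 by rw [div_pow, sq_sqrt hk.le]; simp only [k]; field_simp,
      sqrt_sq (by positivity), mul_comm]
  refine ⟨?_, fun ε _ => ?_, fun ε _ h => ?_⟩
  · rw [hσ, hσc, hεc, unitStress_eq_max_iff.mpr rfl]
  · rw [hσ, hσc]
    exact mul_le_mul_of_nonneg_left (unitStress_le _) (by positivity)
  · rw [hσ, hσc, mul_right_inj' (by positivity), unitStress_eq_max_iff, ← hεc] at h
    exact mul_left_cancel₀ hsk.ne' h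
end

section
/- For every matrix ε, the transversely isotropic free energy Ψ(ε) = (λ/2)(tr ε)² + μ·tr(ε²) + (χ/2)(tr(ε·M))² + 2Ξ·tr(ε²·M) is Fréchet differentiable at ε, with derivative given by h ↦ tr(σ(ε)·h), where the constitutive stress tensor is σ(ε) = λ·(tr ε)·I + 2μ·ε + χ·tr(ε·M)·M + 2Ξ·(ε·M + M·ε). -/
/-!
Represent linear forms on matrices through the trace pairing `S ↦ (h ↦ tr (S h))`. The derivative
of `e ↦ tr (e A)` is represented by `A` and, by cyclicity of the trace, that of `e ↦ tr (e e A)`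
at `ε` by `ε A + A ε`. Sums, scalar multiples and squares of functions with represented
derivatives again have represented derivatives, and for `Ψ` the representing matrix is `σ(ε)`.
-/

open Matrix

attribute [local instance] Matrix.normedAddCommGroup Matrix.normedSpace

namespace Matrix

variable {ι 𝕜 : Type*} [Fintype ι] [NontriviallyNormedField 𝕜] [CompleteSpace 𝕜]

noncomputable def traceForm (S : Matrix ι ι 𝕜) : Matrix ι ι 𝕜 →L[𝕜] 𝕜 :=
  LinearMap.toContinuousLinearMap ((traceLinearMap ι 𝕜 𝕜).comp (LinearMap.mulLeft 𝕜 S))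

@[simp]
lemma traceForm_apply (S h : Matrix ι ι 𝕜) : traceForm S h = (S * h).trace := rfl

noncomputable def traceMulMulForm (A : Matrix ι ι 𝕜) : Matrix ι ι 𝕜 →L[𝕜] Matrix ι ι 𝕜 →L[𝕜] 𝕜 :=
  ((LinearMap.mul 𝕜 (Matrix ι ι 𝕜)).compr₂
    ((traceLinearMap ι 𝕜 𝕜).comp (LinearMap.mulRight 𝕜 A))).toContinuousBilinearMap

lemma hasFDerivAt_trace_mul (A ε : Matrix ι ι 𝕜) :
    HasFDerivAt (fun e => (e * A).trace) (traceForm A) ε := by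
  rw [show (fun e => (e * A).trace) = traceForm A from funext fun e => trace_mul_comm e A]
  exact (traceForm A).hasFDerivAt

lemma hasFDerivAt_trace_mul_self_mul (A ε : Matrix ι ι 𝕜) :
    HasFDerivAt (fun e => (e * e * A).trace) (traceForm (ε * A + A * ε)) ε := by
  refine ((traceMulMulForm A).hasFDerivAt.clm_apply (hasFDerivAt_id ε)).congr_fderiv ?_
  ext h
  -- The calculus lemmas see `Matrix` through its normed structure, whose topology is not reducibly
  -- the one `traceForm` is typed with, so `traceForm_apply` cannot fire and we unfold by `change`.
  change (ε * h * A).trace + (h * ε * A).trace = ((ε * A + A * ε) * h).trace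
  rw [trace_mul_cycle ε h A, Matrix.mul_assoc h, trace_mul_comm h, add_mul, trace_add, add_comm]

end Matrix

namespace HasFDerivAt

variable {ι 𝕜 : Type*} [Fintype ι] [NontriviallyNormedField 𝕜] [CompleteSpace 𝕜]
  {f g : Matrix ι ι 𝕜 → 𝕜} {S T ε : Matrix ι ι 𝕜}

lemma add_traceForm (hf : HasFDerivAt f (traceForm S) ε)
    (hg : HasFDerivAt g (traceForm T) ε) :
    HasFDerivAt (fun e => f e + g e) (traceForm (S + T)) ε := by
  refine (hf.add hg).congr_fderiv ?_
  ext h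
  change (S * h).trace + (T * h).trace = ((S + T) * h).trace
  rw [add_mul, trace_add]

lemma const_mul_traceForm (hf : HasFDerivAt f (traceForm S) ε) (c : 𝕜) :
    HasFDerivAt (fun e => c * f e) (traceForm (c • S)) ε := by
  refine (hf.const_mul c).congr_fderiv ?_
  ext h
  change c * (S * h).trace = ((c • S) * h).trace
  rw [smul_mul, trace_smul, smul_eq_mul]

lemma sq_traceForm (hf : HasFDerivAt f (traceForm S) ε) :
    HasFDerivAt (fun e => f e ^ 2) (traceForm ((2 * f ε) • S)) ε := by
  refine (hf.pow 2).congr_fderiv ?_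
  ext h
  change (2 • f ε ^ (2 - 1)) * (S * h).trace = (((2 * f ε) • S) * h).trace
  rw [smul_mul, trace_smul, smul_eq_mul, pow_one, nsmul_eq_mul, Nat.cast_ofNat]

end HasFDerivAt

theorem transversely_isotropic_energy_hasFDerivAt_general
    {n : ℕ}
    (M : Matrix (Fin n) (Fin n) ℝ)
    (lam mu χ Ξ : ℝ) (ε : Matrix (Fin n) (Fin n) ℝ) :
    ∃ L : Matrix (Fin n) (Fin n) ℝ →L[ℝ] ℝ,
      (∀ h : Matrix (Fin n) (Fin n) ℝ,
        L h = (((lam * ε.trace) • (1 : Matrix (Fin n) (Fin n) ℝ) + (2 * mu) • ε +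
          (χ * (ε * M).trace) • M + (2 * Ξ) • (ε * M + M * ε)) * h).trace) ∧
      HasFDerivAt (fun e : Matrix (Fin n) (Fin n) ℝ =>
        lam / 2 * e.trace ^ 2 + mu * (e * e).trace +
          χ / 2 * ((e * M).trace) ^ 2 + 2 * Ξ * (e * e * M).trace) L ε := by
  have hlam := (hasFDerivAt_trace_mul 1 ε).sq_traceForm.const_mul_traceForm (lam / 2)
  have hmu := (hasFDerivAt_trace_mul_self_mul 1 ε).const_mul_traceForm mu
  have hχ := (hasFDerivAt_trace_mul M ε).sq_traceForm.const_mul_traceForm (χ / 2)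
  have hΞ := (hasFDerivAt_trace_mul_self_mul M ε).const_mul_traceForm (2 * Ξ)
  have hΨ := ((hlam.add_traceForm hmu).add_traceForm hχ).add_traceForm hΞ
  simp only [Matrix.mul_one, Matrix.one_mul] at hΨ
  refine ⟨_, fun h => ?_, hΨ⟩
  simp only [traceForm_apply, add_mul, smul_mul, trace_add, trace_smul, smul_eq_mul]
  ring

/-- The transversely isotropic free energy
`Ψ(ε) = (λ/2)(tr ε)² + μ·tr(ε²) + (χ/2)(tr(ε·M))² + 2Ξ·tr(ε²·M)` is Fréchet
differentiable at every `ε`, with derivative `h ↦ tr(σ(ε)·h)`, where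
`σ(ε) = λ(tr ε)·I + 2μ·ε + χ·tr(ε·M)·M + 2Ξ·(ε·M + M·ε)`. -/
theorem transversely_isotropic_energy_hasFDerivAt
    {n : ℕ} (hn : 1 ≤ n)
    (M : Matrix (Fin n) (Fin n) ℝ) (hM : M.IsSymm)
    (lam mu χ Ξ : ℝ) (ε : Matrix (Fin n) (Fin n) ℝ) :
    ∃ L : Matrix (Fin n) (Fin n) ℝ →L[ℝ] ℝ,
      (∀ h : Matrix (Fin n) (Fin n) ℝ,
        L h = (((lam * ε.trace) • (1 : Matrix (Fin n) (Fin n) ℝ) + (2 * mu) • ε +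
          (χ * (ε * M).trace) • M + (2 * Ξ) • (ε * M + M * ε)) * h).trace) ∧
      HasFDerivAt (fun e : Matrix (Fin n) (Fin n) ℝ =>
        lam / 2 * e.trace ^ 2 + mu * (e * e).trace +
          χ / 2 * ((e * M).trace) ^ 2 + 2 * Ξ * (e * e * M).trace) L ε :=
  transversely_isotropic_energy_hasFDerivAt_general M lam mu χ Ξ ε
end

section
/- The additively decomposed isotropic strain-energy function recovers the total isotropic energy: (λ/2)·⟨tr ε⟩₊² + μ·tr((ε⁺)²) + (λ/2)·⟨tr ε⟩₋² + μ·tr((ε⁻)²) = (λ/2)·(tr ε)² + μ·tr(ε²); that is, Ψ^{iso,+}(I₁⁺, I₂⁺) + Ψ^{iso,−}(I₁⁻, I₂⁻) = Ψ^{iso}(I₁, I₂). -/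
open Matrix BigOperators

/-! `ε`, `ε⁺` and `ε⁻` are combinations of the same mutually orthogonal rank-one projectors
`Nᵢ Nᵢᵀ`, so `tr (Σ aᵢ Nᵢ Nᵢᵀ · Σ bᵢ Nᵢ Nᵢᵀ) = Σ aᵢ bᵢ` turns every `tr ((·)²)` into a sum of squared
eigenvalues. The identity then reduces to `⟨x⟩₊² + ⟨x⟩₋² = x²`, applied to each eigenvalue and
to `tr ε`. -/

lemma add_abs_div_two_sq_add_sub_abs_div_two_sq {K : Type*} [Field K] [LinearOrder K]
    [IsStrictOrderedRing K] (x : K) :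
    ((x + |x|) / 2) ^ 2 + ((x - |x|) / 2) ^ 2 = x ^ 2 := by
  linear_combination sq_abs x / 2

lemma trace_sum_smul_vecMulVec_mul_sum_smul_vecMulVec {ι m R : Type*} [Fintype ι]
    [DecidableEq ι] [Fintype m] [CommSemiring R] {N : ι → m → R}
    (hN : ∀ i j, N i ⬝ᵥ N j = if i = j then 1 else 0) (a b : ι → R) :
    ((∑ i, a i • vecMulVec (N i) (N i)) * ∑ j, b j • vecMulVec (N j) (N j)).trace =
      ∑ i, a i * b i := by
  simp only [Finset.sum_mul_sum, trace_sum, smul_mul_smul_comm, vecMulVec_mul_vecMulVec,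
    trace_smul, trace_vecMulVec, dotProduct_smul, hN, smul_eq_mul]
  simp

theorem strain_energy_tension_compression_decomposition_general
    {n : ℕ} (ε : Matrix (Fin n) (Fin n) ℝ)
    (lam mu : ℝ)
    (μ : Fin n → ℝ) (N : Fin n → (Fin n → ℝ))
    (hortho : ∀ i j, N i ⬝ᵥ N j = if i = j then (1 : ℝ) else 0)
    (hspec : ε = ∑ i, μ i • vecMulVec (N i) (N i)) :
    let εp : Matrix (Fin n) (Fin n) ℝ :=
      ∑ i, ((μ i + |μ i|) / 2) • vecMulVec (N i) (N i)
    let εm : Matrix (Fin n) (Fin n) ℝ :=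
      ∑ i, ((μ i - |μ i|) / 2) • vecMulVec (N i) (N i)
    lam / 2 * ((ε.trace + |ε.trace|) / 2) ^ 2 + mu * (εp * εp).trace +
      (lam / 2 * ((ε.trace - |ε.trace|) / 2) ^ 2 + mu * (εm * εm).trace) =
      lam / 2 * ε.trace ^ 2 + mu * (ε * ε).trace := by
  intro εp εm
  have hsplit : (εp * εp).trace + (εm * εm).trace = (ε * ε).trace := by
    simp only [εp, εm, hspec, trace_sum_smul_vecMulVec_mul_sum_smul_vecMulVec hortho]
    rw [← Finset.sum_add_distrib]
    simp only [← sq, add_abs_div_two_sq_add_sub_abs_div_two_sq]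
  linear_combination mu * hsplit + lam / 2 * add_abs_div_two_sq_add_sub_abs_div_two_sq ε.trace

/-- The additively decomposed isotropic strain-energy function recovers the
total isotropic energy:
`Ψ^{iso,+}(I₁⁺, I₂⁺) + Ψ^{iso,−}(I₁⁻, I₂⁻) = Ψ^{iso}(I₁, I₂)`. -/
theorem strain_energy_tension_compression_decomposition
    {n : ℕ} (ε : Matrix (Fin n) (Fin n) ℝ) (hεsym : ε.IsSymm)
    (lam mu : ℝ)
    (μ : Fin n → ℝ) (N : Fin n → (Fin n → ℝ))
    (hortho : ∀ i j, N i ⬝ᵥ N j = if i = j then (1 : ℝ) else 0)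
    (hspec : ε = ∑ i, μ i • vecMulVec (N i) (N i)) :
    let εp : Matrix (Fin n) (Fin n) ℝ :=
      ∑ i, ((μ i + |μ i|) / 2) • vecMulVec (N i) (N i)
    let εm : Matrix (Fin n) (Fin n) ℝ :=
      ∑ i, ((μ i - |μ i|) / 2) • vecMulVec (N i) (N i)
    lam / 2 * ((ε.trace + |ε.trace|) / 2) ^ 2 + mu * (εp * εp).trace +
      (lam / 2 * ((ε.trace - |ε.trace|) / 2) ^ 2 + mu * (εm * εm).trace) =
      lam / 2 * ε.trace ^ 2 + mu * (ε * ε).trace :=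
  strain_energy_tension_compression_decomposition_general ε lam mu μ N hortho hspec
end
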